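/- arXiv:2510.10760 — 4 statements merged into one kernel-verified Lean document; each statement's English description precedes it below -/
import Mathlib

section
/- Let E be a finite set with at least two elements, endow the sequence space E^ℕ with the metric d(p,q) = (1/2)^{min{n : p_n ≠ q_n}} for p ≠ q (and d(p,p) = 0). Let λ ∈ (0,1) and let f : E → ℝ be a non-constant function, and define H(p) = ∑_{n=0}^∞ λ^n f(p_n). Then there exists a real number s < log(card E)/log 2 such that for every z ∈ ℝ, the level set {p ∈ E^ℕ : H(p) = z} has Hausdorff dimension at most s. -/
open MeasureTheory
open scoped ENNReal NNReal

set_option maxHeartbeats 1000000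

lemma sep_lemma {E : Type*} {lam C : ℝ} (h0 : 0 < lam) (h1 : lam < 1) (f : E → ℝ)
    (hB : ∀ a b : E, |f a - f b| ≤ C) (hB1 : ∀ a : E, |f a| ≤ C)
    {p q : ℕ → E} {n L : ℕ}
    (hpq : (∑' k : ℕ, lam ^ k * f (p k)) = (∑' k : ℕ, lam ^ k * f (q k)))
    (hlow : ∀ k < n, p k = q k) (hmid : ∀ k, n < k → k < n + L → p k = q k) :
    |f (p n) - f (q n)| ≤ lam ^ L * (C * (1 - lam)⁻¹) := by
  have hC0 : 0 ≤ C := le_trans (abs_nonneg _) (hB1 (p 0))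
  set g : ℕ → ℝ := fun k => lam ^ k * (f (p k) - f (q k)) with hgdef
  have hb : ∀ k, |g k| ≤ lam ^ k * C := by
    intro k
    have : |g k| = lam ^ k * |f (p k) - f (q k)| := by
      rw [hgdef, abs_mul, abs_pow, abs_of_pos h0]
    rw [this]
    exact mul_le_mul_of_nonneg_left (hB _ _) (pow_nonneg h0.le k)
  have hgeo : Summable (fun k => lam ^ k * C) :=
    (summable_geometric_of_lt_one h0.le h1).mul_right C
  have habs : Summable (fun k => |g k|) :=
    Summable.of_nonneg_of_le (fun k => abs_nonneg _) hb hgeo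
  have hg : Summable g := habs.of_abs
  have hsummand : ∀ r : ℕ → E, Summable (fun k => lam ^ k * f (r k)) := by
    intro r
    refine Summable.of_abs (Summable.of_nonneg_of_le (fun k => abs_nonneg _) (fun k => ?_) hgeo)
    rw [abs_mul, abs_pow, abs_of_pos h0]
    exact mul_le_mul_of_nonneg_left (hB1 _) (pow_nonneg h0.le k)
  have h0sum : ∑' k, g k = 0 := by
    have := Summable.tsum_sub (hsummand p) (hsummand q)
    simp only [← mul_sub] at this
    rw [hgdef]
    rw [this, hpq, sub_self]
  have hsplit : ∑' k, g k = g n + ∑' k, ite (k = n) 0 (g k) := Summable.tsum_eq_add_tsum_ite hg n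
  set h : ℕ → ℝ := fun k => ite (k = n) 0 (g k) with hhdef
  have hhb : ∀ k, |h k| ≤ lam ^ k * C := by
    intro k
    by_cases hk : k = n <;> simp [hhdef, hk]
    · positivity
    · exact hb k
  have hhabs : Summable (fun k => |h k|) :=
    Summable.of_nonneg_of_le (fun k => abs_nonneg _) hhb hgeo
  have hgn : |g n| = |∑' k, h k| := by
    have : g n = -∑' k, h k := by
      rw [h0sum] at hsplit; linarith [hsplit]
    rw [this, abs_neg]
  have habs_le : |∑' k, h k| ≤ ∑' k, |h k| := by
    simpa using norm_tsum_le_tsum_norm (f := h) (by simpa using hhabs)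
  have htail : ∑' k, |h k| ≤ lam ^ (n + L) * (C * (1 - lam)⁻¹) := by
    have hsplit2 : (∑ k ∈ Finset.range (n + L), |h k|) + ∑' k, |h (k + (n + L))| = ∑' k, |h k| :=
      Summable.sum_add_tsum_nat_add (n + L) hhabs
    have hzero : (∑ k ∈ Finset.range (n + L), |h k|) = 0 := by
      refine Finset.sum_eq_zero fun k hk => ?_
      rw [Finset.mem_range] at hk
      rcases lt_trichotomy k n with hlt | heq | hgt
      · simp [hhdef, hgdef, hlow k hlt, Nat.ne_of_lt hlt]
      · simp [hhdef, heq]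
      · simp [hhdef, hgdef, hmid k hgt hk, Nat.ne_of_gt hgt]
    have hshift : ∑' k, |h (k + (n + L))| ≤ ∑' k : ℕ, lam ^ (k + (n + L)) * C := by
      refine Summable.tsum_le_tsum (fun k => hhb _) ((summable_nat_add_iff (n + L)).2 hhabs) ?_
      exact (summable_nat_add_iff (n + L)).2 hgeo
    have hgeosum : ∑' k : ℕ, lam ^ (k + (n + L)) * C = lam ^ (n + L) * (C * (1 - lam)⁻¹) := by
      have : ∀ k : ℕ, lam ^ (k + (n + L)) * C = lam ^ k * (lam ^ (n + L) * C) := by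
        intro k; rw [pow_add]; ring
      rw [tsum_congr this, tsum_mul_right, tsum_geometric_of_lt_one h0.le h1]
      ring
    calc ∑' k, |h k| = ∑' k, |h (k + (n + L))| := by rw [← hsplit2, hzero, zero_add]
      _ ≤ ∑' k : ℕ, lam ^ (k + (n + L)) * C := hshift
      _ = lam ^ (n + L) * (C * (1 - lam)⁻¹) := hgeosum
  have hfinal : lam ^ n * |f (p n) - f (q n)| ≤ lam ^ n * (lam ^ L * (C * (1 - lam)⁻¹)) := by
    have h1' : |g n| = lam ^ n * |f (p n) - f (q n)| := by
      rw [hgdef, abs_mul, abs_pow, abs_of_pos h0]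
    have : lam ^ (n + L) = lam ^ n * lam ^ L := pow_add lam n L
    calc lam ^ n * |f (p n) - f (q n)| = |g n| := h1'.symm
      _ ≤ ∑' k, |h k| := hgn ▸ habs_le
      _ ≤ lam ^ (n + L) * (C * (1 - lam)⁻¹) := htail
      _ = lam ^ n * (lam ^ L * (C * (1 - lam)⁻¹)) := by rw [this]; ring
  exact le_of_mul_le_mul_left hfinal (pow_pos h0 n)

lemma count_step {E : Type*} [Fintype E] [DecidableEq E] (S : Set (ℕ → E)) (e e' : E)
    (hee : e ≠ e') {L : ℕ} (hL : 0 < L)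
    (key : ∀ p ∈ S, ∀ q ∈ S, ∀ n : ℕ, (∀ k < n, p k = q k) →
      (∀ k, n < k → k < n + L → p k = q k) → p n = e → q n ≠ e')
    (A : ∀ m : ℕ, Finset (Fin m → E))
    (hA : ∀ m w, w ∈ A m ↔ ∃ p ∈ S, ∀ i : Fin m, p (i : ℕ) = w i)
    (n : ℕ) :
    (A (n + L)).card ≤
      (A n).card * (Finset.univ.filter fun v : Fin L → E => v ⟨0, hL⟩ ≠ e').card := by
  classical
  set z : Fin L := ⟨0, hL⟩ with hzdef
  set ψ : (Fin L → E) → (Fin L → E) := fun v => if v z = e' then Function.update v z e else v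
    with hψdef
  set Φ : (Fin (n + L) → E) → (Fin n → E) × (Fin L → E) := fun w =>
    (fun i => w ⟨(i : ℕ), by omega⟩, ψ fun j => w ⟨n + (j : ℕ), by omega⟩) with hΦdef
  have hψne : ∀ v : Fin L → E, ψ v z ≠ e' := by
    intro v
    by_cases hv : v z = e'
    · simp only [hψdef, hv, if_true, Function.update_self]
      exact hee
    · simp only [hψdef, hv, if_false]
      exact hv
  have hmaps : ∀ w ∈ A (n + L),
      Φ w ∈ (A n) ×ˢ (Finset.univ.filter fun v : Fin L → E => v z ≠ e') := by
    intro w hw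
    obtain ⟨p, hpS, hpw⟩ := (hA _ w).1 hw
    refine Finset.mem_product.2 ⟨(hA n _).2 ⟨p, hpS, fun i => ?_⟩,
      Finset.mem_filter.2 ⟨Finset.mem_univ _,
        hψne (fun j => w ⟨n + (j : ℕ), by omega⟩)⟩⟩
    exact hpw ⟨(i : ℕ), by omega⟩
  have hinj : Set.InjOn Φ ↑(A (n + L)) := by
    intro w hw w' hw' heq
    simp only [Finset.mem_coe] at hw hw'
    obtain ⟨p, hpS, hpw⟩ := (hA _ w).1 hw
    obtain ⟨p', hp'S, hp'w⟩ := (hA _ w').1 hw'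
    have hfst : ∀ i : Fin n, w ⟨(i : ℕ), by omega⟩ = w' ⟨(i : ℕ), by omega⟩ :=
      fun i => congrFun (congrArg Prod.fst heq) i
    set v : Fin L → E := fun j => w ⟨n + (j : ℕ), by omega⟩ with hvdef
    set v' : Fin L → E := fun j => w' ⟨n + (j : ℕ), by omega⟩ with hv'def
    have hsnd : ψ v = ψ v' := congrArg Prod.snd heq
    have hpn : ∀ k (hk : k < n + L), p k = w ⟨k, hk⟩ := fun k hk => hpw ⟨k, hk⟩
    have hp'n : ∀ k (hk : k < n + L), p' k = w' ⟨k, hk⟩ := fun k hk => hp'w ⟨k, hk⟩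
    -- the mixed case is impossible
    have hmix : ∀ (a b : ℕ → E) (wa wb : Fin (n + L) → E) (va vb : Fin L → E),
        a ∈ S → b ∈ S → (∀ k (hk : k < n + L), a k = wa ⟨k, hk⟩) →
        (∀ k (hk : k < n + L), b k = wb ⟨k, hk⟩) →
        (∀ j : Fin L, va j = wa ⟨n + (j : ℕ), by omega⟩) →
        (∀ j : Fin L, vb j = wb ⟨n + (j : ℕ), by omega⟩) →
        (∀ i : Fin n, wa ⟨(i : ℕ), by omega⟩ = wb ⟨(i : ℕ), by omega⟩) →
        va z = e' → vb z = e → (∀ j, j ≠ z → va j = vb j) → False := by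
      intro a b wa wb va vb haS hbS haw hbw hva hvb hfab hvaz hvbz hagree
      have hbn : b n = e := by
        have h1 : b n = vb z := (hbw n (by omega)).trans (hvb z).symm
        rw [h1, hvbz]
      have han : a n = e' := by
        have h1 : a n = va z := (haw n (by omega)).trans (hva z).symm
        rw [h1, hvaz]
      refine key b hbS a haS n ?_ ?_ hbn han
      · intro k hk
        rw [hbw k (by omega), haw k (by omega)]
        exact (hfab ⟨k, hk⟩).symm
      · intro k hk1 hk2
        have hjne : (⟨k - n, by omega⟩ : Fin L) ≠ z := by
          intro hcon
          have hval : k - n = 0 := congrArg Fin.val hcon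
          omega
        have h1 : b k = vb ⟨k - n, by omega⟩ := by
          rw [hbw k (by omega), hvb ⟨k - n, by omega⟩]
          exact congrArg wb (Fin.ext (show k = n + (k - n) by omega))
        have h2 : a k = va ⟨k - n, by omega⟩ := by
          rw [haw k (by omega), hva ⟨k - n, by omega⟩]
          exact congrArg wa (Fin.ext (show k = n + (k - n) by omega))
        rw [h1, h2, hagree _ hjne]
    have hvv' : v = v' := by
      by_cases h1 : v z = e' <;> by_cases h2 : v' z = e'
      · have hup : Function.update v z e = Function.update v' z e := by
          simpa only [hψdef, h1, h2, if_true] using hsnd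
        funext j
        by_cases hj : j = z
        · rw [hj, h1, h2]
        · have := congrFun hup j
          rwa [Function.update_of_ne hj, Function.update_of_ne hj] at this
      · exfalso
        have hup : Function.update v z e = v' := by
          simpa only [hψdef, h1, h2, if_true, if_false] using hsnd
        have hv'z : v' z = e := by rw [← hup, Function.update_self]
        have hagree : ∀ j, j ≠ z → v j = v' j := by
          intro j hj
          rw [← hup, Function.update_of_ne hj]
        exact hmix p p' w w' v v' hpS hp'S hpn hp'n (fun j => rfl) (fun j => rfl)
          hfst h1 hv'z hagree
      · exfalso
        have hup : v = Function.update v' z e := by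
          simpa only [hψdef, h1, h2, if_true, if_false] using hsnd
        have hvz : v z = e := by rw [hup, Function.update_self]
        have hagree : ∀ j, j ≠ z → v' j = v j := by
          intro j hj
          rw [hup, Function.update_of_ne hj]
        exact hmix p' p w' w v' v hp'S hpS hp'n hpn (fun j => rfl) (fun j => rfl)
          (fun i => (hfst i).symm) h2 hvz hagree
      · simpa only [hψdef, h1, h2, if_false] using hsnd
    funext i
    rcases lt_or_ge (i : ℕ) n with hi | hi
    · exact hfst ⟨(i : ℕ), hi⟩
    · have hv := congrFun hvv' ⟨(i : ℕ) - n, by omega⟩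
      have hidx : (⟨n + ((i : ℕ) - n), by omega⟩ : Fin (n + L)) = i :=
        Fin.ext (show n + ((i : ℕ) - n) = (i : ℕ) by omega)
      calc w i = w ⟨n + ((i : ℕ) - n), by omega⟩ := by rw [hidx]
        _ = w' ⟨n + ((i : ℕ) - n), by omega⟩ := hv
        _ = w' i := by rw [hidx]
  calc (A (n + L)).card ≤ ((A n) ×ˢ (Finset.univ.filter fun v : Fin L → E => v z ≠ e')).card :=
        Finset.card_le_card_of_injOn Φ hmaps hinj
    _ = (A n).card * (Finset.univ.filter fun v : Fin L → E => v ⟨0, hL⟩ ≠ e').card := by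
        rw [Finset.card_product]

set_option maxHeartbeats 1000000 in
/-- **Level sets of the transfer function on sequence space have small Hausdorff dimension.**
Let `E` be a finite set with at least two elements, endow the sequence space `ℕ → E` with the
metric `d(p,q) = (1/2) ^ min {n | p n ≠ q n}` for `p ≠ q` (this is `PiNat.metricSpace`).
Let `λ ∈ (0,1)` and let `f : E → ℝ` be non-constant, and define
`H p = ∑' n, λ ^ n * f (p n)`. Then there is `s < log (card E) / log 2` such that every level
set of `H` has Hausdorff dimension at most `s`. -/
theorem stmt0 {E : Type*} [Fintype E] [TopologicalSpace E] [DiscreteTopology E]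
    (hcard : 2 ≤ Fintype.card E)
    (lam : ℝ) (hlam : lam ∈ Set.Ioo (0 : ℝ) 1)
    (f : E → ℝ) (hf : ∃ e e' : E, f e ≠ f e') :
    letI : MetricSpace (ℕ → E) := PiNat.metricSpace
    ∃ s : ℝ, s < Real.log (Fintype.card E) / Real.log 2 ∧
      ∀ z : ℝ, dimH {p : ℕ → E | (∑' n : ℕ, lam ^ n * f (p n)) = z} ≤ ENNReal.ofReal s := by
  classical
  letI : MetricSpace (ℕ → E) := PiNat.metricSpace
  letI : MeasurableSpace (ℕ → E) := borel _
  haveI : BorelSpace (ℕ → E) := ⟨rfl⟩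
  obtain ⟨hlam0, hlam1⟩ := hlam
  obtain ⟨e, e', hee'⟩ := hf
  have hee : e ≠ e' := fun h => hee' (by rw [h])
  have hEne : (Finset.univ : Finset E).Nonempty := ⟨e, Finset.mem_univ e⟩
  -- a uniform bound on |f|
  set C : ℝ := Finset.univ.sup' hEne (fun a : E => |f a|) + Finset.univ.sup' hEne (fun a : E => |f a|) with hCdef
  have hB1 : ∀ a : E, |f a| ≤ C := by
    intro a
    have h := Finset.le_sup' (fun a : E => |f a|) (Finset.mem_univ a)
    have h0 : 0 ≤ Finset.univ.sup' hEne (fun a : E => |f a|) := le_trans (abs_nonneg _) h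
    rw [hCdef]; linarith
  have hB : ∀ a b : E, |f a - f b| ≤ C := by
    intro a b
    have ha := Finset.le_sup' (fun a : E => |f a|) (Finset.mem_univ a)
    have hb := Finset.le_sup' (fun a : E => |f a|) (Finset.mem_univ b)
    calc |f a - f b| ≤ |f a| + |f b| := abs_sub _ _
      _ ≤ C := by rw [hCdef]; exact add_le_add ha hb
  have hC0 : 0 ≤ C := le_trans (abs_nonneg _) (hB1 e)
  set δ : ℝ := |f e - f e'| with hδdef
  have hδ : 0 < δ := abs_pos.2 (sub_ne_zero.2 hee')
  set D : ℝ := C * (1 - lam)⁻¹ with hDdef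
  have hD0 : 0 ≤ D := mul_nonneg hC0 (inv_nonneg.2 (by linarith))
  obtain ⟨L0, hL0⟩ : ∃ m : ℕ, lam ^ m < δ / (D + 1) :=
    exists_pow_lt_of_lt_one (by positivity) hlam1
  set L : ℕ := L0 + 1 with hLdef
  have hL : 0 < L := Nat.succ_pos _
  have hLbound : lam ^ L * D < δ := by
    have h1 : lam ^ L ≤ lam ^ L0 := pow_le_pow_of_le_one hlam0.le hlam1.le (by omega)
    have h2 : lam ^ L0 * (D + 1) < δ := by
      have := mul_lt_mul_of_pos_right hL0 (show (0:ℝ) < D + 1 by linarith)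
      rwa [div_mul_cancel₀] at this
      linarith
    have h3 : lam ^ L * D ≤ lam ^ L0 * (D + 1) := by
      have hp0 : (0:ℝ) ≤ lam ^ L0 := pow_nonneg hlam0.le _
      nlinarith [pow_nonneg hlam0.le L]
    linarith
  -- the combinatorial exclusion constant
  set T : Finset (Fin L → E) := Finset.univ.filter fun v : Fin L → E => v ⟨0, hL⟩ ≠ e' with hTdef
  set K : ℕ := T.card with hKdef
  have hK1 : 1 ≤ K := by
    have : (fun _ : Fin L => e) ∈ T := by
      rw [hTdef]; exact Finset.mem_filter.2 ⟨Finset.mem_univ _, hee⟩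
    exact Finset.card_pos.2 ⟨_, this⟩
  have hKlt : K < Fintype.card E ^ L := by
    have hss : T ⊂ Finset.univ := by
      refine Finset.ssubset_univ_iff.2 ?_
      intro h
      have : (fun _ : Fin L => e') ∈ T := h ▸ Finset.mem_univ _
      rw [hTdef] at this
      exact (Finset.mem_filter.1 this).2 rfl
    calc K < (Finset.univ : Finset (Fin L → E)).card := Finset.card_lt_card hss
      _ = Fintype.card E ^ L := by rw [Finset.card_univ, Fintype.card_fun, Fintype.card_fin]
  -- the dimension bound
  set s : ℝ := Real.log K / (L * Real.log 2) with hsdef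
  have hlog2 : (0:ℝ) < Real.log 2 := Real.log_pos (by norm_num)
  have hLlog2 : (0:ℝ) < L * Real.log 2 := by positivity
  have hs0 : 0 ≤ s := div_nonneg (Real.log_nonneg (by exact_mod_cast hK1)) hLlog2.le
  have hslt : s < Real.log (Fintype.card E) / Real.log 2 := by
    have hKpos : (0:ℝ) < K := by exact_mod_cast hK1
    have h1 : Real.log K < L * Real.log (Fintype.card E) := by
      have := Real.log_lt_log hKpos (show (K:ℝ) < (Fintype.card E : ℝ) ^ L by exact_mod_cast hKlt)
      rwa [Real.log_pow] at this
    rw [hsdef, div_lt_div_iff₀ hLlog2 hlog2]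
    nlinarith
  refine ⟨s, hslt, ?_⟩
  intro z
  set S : Set (ℕ → E) := {p : ℕ → E | (∑' n : ℕ, lam ^ n * f (p n)) = z} with hSdef
  have keyS : ∀ p ∈ S, ∀ q ∈ S, ∀ n : ℕ, (∀ k < n, p k = q k) →
      (∀ k, n < k → k < n + L → p k = q k) → p n = e → q n ≠ e' := by
    intro p hp q hq n hlow hmid hpe hqe
    have hpq : (∑' k : ℕ, lam ^ k * f (p k)) = (∑' k : ℕ, lam ^ k * f (q k)) := by
      rw [Set.mem_setOf_eq] at hp hq
      rw [hp, hq]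
    have hle := sep_lemma hlam0 hlam1 f hB hB1 hpq hlow hmid
    rw [hpe, hqe] at hle
    have : δ ≤ lam ^ L * D := by rw [hδdef, hDdef]; exact hle
    linarith
  set A : ∀ m : ℕ, Finset (Fin m → E) :=
    fun m => Finset.univ.filter fun w => ∃ p ∈ S, ∀ i : Fin m, p (i : ℕ) = w i with hAdef
  have hA : ∀ m w, w ∈ A m ↔ ∃ p ∈ S, ∀ i : Fin m, p (i : ℕ) = w i := by
    intro m w
    rw [hAdef]
    simp only [Finset.mem_filter, Finset.mem_univ, true_and]
  have hstep : ∀ n : ℕ, (A (n + L)).card ≤ (A n).card * K := by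
    intro n
    have h := count_step S e e' hee hL keyS A hA n
    calc (A (n + L)).card
        ≤ (A n).card * (Finset.univ.filter fun v : Fin L → E => v ⟨0, hL⟩ ≠ e').card := h
      _ = (A n).card * K := by
          rw [hKdef, hTdef]
  have hiter : ∀ m : ℕ, (A (m * L)).card ≤ K ^ m := by
    intro m
    induction m with
    | zero =>
        have h1 : (A (0 * L)).card ≤ (Finset.univ : Finset (Fin (0 * L) → E)).card :=
          Finset.card_le_card (by rw [hAdef]; exact Finset.filter_subset _ _)
        have h2 : (Finset.univ : Finset (Fin (0 * L) → E)).card = 1 := by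
          rw [Finset.card_univ, Fintype.card_fun]
          simp
        rw [pow_zero]
        omega
    | succ m ih =>
        have h1 : (m + 1) * L = m * L + L := by ring
        rw [h1]
        calc (A (m * L + L)).card ≤ (A (m * L)).card * K := hstep (m * L)
          _ ≤ K ^ m * K := Nat.mul_le_mul_right K ih
          _ = K ^ (m + 1) := (pow_succ K m).symm
  -- now the Hausdorff measure estimate
  apply dimH_le
  intro d' hd'
  by_contra hcon
  push_neg at hcon
  have hsd : s < (d' : ℝ) := by
    by_contra hsd
    push_neg at hsd
    have hle : (d' : ℝ≥0∞) ≤ ENNReal.ofReal s := by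
      rw [← ENNReal.ofReal_coe_nnreal]
      exact ENNReal.ofReal_le_ofReal hsd
    exact absurd hcon hle.not_gt
  have hd'0 : 0 < (d' : ℝ) := lt_of_le_of_lt hs0 hsd
  have hKpos : (0:ℝ) < K := by exact_mod_cast hK1
  set y : ℝ := (1 / 2 : ℝ) ^ L with hydef
  have hy0 : 0 < y := by positivity
  have hy1 : y < 1 := by
    rw [hydef]
    exact pow_lt_one₀ (by norm_num) (by norm_num) (by omega)
  set t : ∀ m : ℕ, (Fin (m * L) → E) → Set (ℕ → E) :=
    fun m w => S ∩ {p : ℕ → E | ∀ i : Fin (m * L), p (i : ℕ) = w i} with htdef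
  have hr : Filter.Tendsto (fun m : ℕ => ENNReal.ofReal (y ^ m)) Filter.atTop (nhds 0) := by
    have heq : (fun m : ℕ => ENNReal.ofReal (y ^ m)) = fun m : ℕ => (ENNReal.ofReal y) ^ m := by
      funext m; exact ENNReal.ofReal_pow hy0.le m
    rw [heq]
    exact ENNReal.tendsto_pow_atTop_nhds_zero_of_lt_one (ENNReal.ofReal_lt_one.2 hy1)
  have hdiam : ∀ (m : ℕ) (w : Fin (m * L) → E),
      EMetric.diam (t m w) ≤ ENNReal.ofReal (y ^ m) := by
    intro m w
    apply EMetric.diam_le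
    intro x hx x' hx'
    rw [edist_dist]
    apply ENNReal.ofReal_le_ofReal
    have hcyl : x' ∈ PiNat.cylinder x (m * L) :=
      PiNat.mem_cylinder_iff.2 fun i hi => (hx'.2 ⟨i, hi⟩).trans (hx.2 ⟨i, hi⟩).symm
    have hdist := PiNat.mem_cylinder_iff_dist_le.1 hcyl
    calc dist x x' = dist x' x := dist_comm _ _
      _ ≤ (1 / 2 : ℝ) ^ (m * L) := hdist
      _ = y ^ m := by rw [hydef, pow_mul']
  have hcovm : ∀ m : ℕ, S ⊆ ⋃ w : Fin (m * L) → E, t m w := by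
    intro m p hp
    exact Set.mem_iUnion.2 ⟨fun i => p (i : ℕ), hp, fun i => rfl⟩
  have hmeas := MeasureTheory.Measure.hausdorffMeasure_le_liminf_sum (d' : ℝ) S
    (fun m : ℕ => ENNReal.ofReal (y ^ m)) hr t
    (Filter.Eventually.of_forall hdiam) (Filter.Eventually.of_forall hcovm)
  set ρ : ℝ≥0∞ := ENNReal.ofReal ((K : ℝ) * y ^ (d' : ℝ)) with hρdef
  have hρ1 : ρ < 1 := by
    rw [hρdef]
    apply ENNReal.ofReal_lt_one.2
    have hlogy : Real.log y = -((L : ℝ) * Real.log 2) := by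
      rw [hydef, Real.log_pow, one_div, Real.log_inv]
      ring
    have hyd : y ^ (d' : ℝ) = Real.exp (Real.log y * (d' : ℝ)) :=
      Real.rpow_def_of_pos hy0 _
    have hKexp : (K : ℝ) = Real.exp (Real.log K) := (Real.exp_log hKpos).symm
    have harg : Real.log K + Real.log y * (d' : ℝ) < 0 := by
      have := (div_lt_iff₀ hLlog2).1 hsd
      rw [hlogy]
      nlinarith
    calc (K : ℝ) * y ^ (d' : ℝ) = Real.exp (Real.log K + Real.log y * (d' : ℝ)) := by
          rw [Real.exp_add, ← hKexp, ← hyd]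
      _ < 1 := Real.exp_lt_one_iff.2 harg
  have hsum : ∀ m : ℕ,
      (∑ w : Fin (m * L) → E, EMetric.diam (t m w) ^ (d' : ℝ)) ≤ ρ ^ m := by
    intro m
    have hempty : ∀ w : Fin (m * L) → E, w ∉ A (m * L) → t m w = ∅ := by
      intro w hw
      rw [htdef]
      ext p
      simp only [Set.mem_inter_iff, Set.mem_setOf_eq, Set.mem_empty_iff_false, iff_false]
      rintro ⟨hpS, hpw⟩
      exact hw ((hA _ w).2 ⟨p, hpS, hpw⟩)
    have hterm : ∀ w : Fin (m * L) → E,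
        EMetric.diam (t m w) ^ (d' : ℝ) ≤
          if w ∈ A (m * L) then ENNReal.ofReal (y ^ m) ^ (d' : ℝ) else 0 := by
      intro w
      by_cases hw : w ∈ A (m * L)
      · rw [if_pos hw]
        exact ENNReal.rpow_le_rpow (hdiam m w) hd'0.le
      · rw [if_neg hw, hempty w hw, EMetric.diam, EMetric.diam_empty, ENNReal.zero_rpow_of_pos hd'0]
    calc (∑ w : Fin (m * L) → E, EMetric.diam (t m w) ^ (d' : ℝ))
        ≤ ∑ w : Fin (m * L) → E,
            if w ∈ A (m * L) then ENNReal.ofReal (y ^ m) ^ (d' : ℝ) else 0 :=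
          Finset.sum_le_sum fun w _ => hterm w
      _ = (A (m * L)).card • (ENNReal.ofReal (y ^ m) ^ (d' : ℝ)) := by
          rw [← Finset.sum_filter, Finset.filter_mem_eq_inter, Finset.univ_inter,
            Finset.sum_const]
      _ ≤ (K ^ m : ℕ) • (ENNReal.ofReal (y ^ m) ^ (d' : ℝ)) :=
          smul_le_smul_of_nonneg_right (hiter m) zero_le
      _ = ρ ^ m := by
          rw [nsmul_eq_mul, Nat.cast_pow]
          rw [ENNReal.ofReal_pow hy0.le]
          rw [← ENNReal.rpow_natCast (ENNReal.ofReal y) m, ← ENNReal.rpow_mul, mul_comm (m : ℝ),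
            ENNReal.rpow_mul, ENNReal.rpow_natCast]
          rw [ENNReal.ofReal_rpow_of_pos hy0, hρdef, ENNReal.ofReal_mul hKpos.le,
            ENNReal.ofReal_natCast, ← mul_pow]
  have hzero : μH[(d' : ℝ)] S = 0 := by
    refine le_antisymm ?_ zero_le
    refine le_trans hmeas ?_
    have h1 : Filter.liminf (fun m : ℕ => ∑ w : Fin (m * L) → E,
        EMetric.diam (t m w) ^ (d' : ℝ)) Filter.atTop ≤
        Filter.liminf (fun m : ℕ => ρ ^ m) Filter.atTop :=
      Filter.liminf_le_liminf (Filter.Eventually.of_forall hsum)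
    have h2 : Filter.liminf (fun m : ℕ => ρ ^ m) Filter.atTop = 0 :=
      (ENNReal.tendsto_pow_atTop_nhds_zero_of_lt_one hρ1).liminf_eq
    rw [h2] at h1
    exact h1
  rw [hd'] at hzero
  exact ENNReal.top_ne_zero hzero
end

section
/- Let C ⊆ ℝ, c₀ > 0 a real constant, m ≥ 1 an integer, and ρ ∈ (0,1). Assume that for every k ∈ ℕ there is a finite family of N_k ≤ c₀·m^k bounded intervals whose union covers C and whose lengths ℓ_{k,1},…,ℓ_{k,N_k} satisfy ℓ_{k,1}+⋯+ℓ_{k,N_k} ≤ (1−ρ)^k. Then the Hausdorff dimension of C is at most log m / (log m − log(1−ρ)), and this quantity is strictly less than 1. -/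
open MeasureTheory MeasureTheory.Measure Filter Set Topology
open scoped ENNReal NNReal

lemma holder_aux {N : ℕ} (ℓ : Fin N → ℝ≥0∞) {s : ℝ} (hs0 : 0 < s) (hs1 : s < 1) :
    ∑ i, ℓ i ^ s ≤ (∑ i, ℓ i) ^ s * (N : ℝ≥0∞) ^ (1 - s) := by
  have h1s : 0 < 1 - s := by linarith
  have hpq : (1/s).HolderConjugate (1/(1-s)) := by
    rw [one_div, one_div]; exact Real.HolderConjugate.inv_inv hs0 h1s (by ring)
  have H := ENNReal.inner_le_Lp_mul_Lq (s := Finset.univ) (fun i => ℓ i ^ s)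
    (fun _ => (1 : ℝ≥0∞)) hpq
  simp only [mul_one, one_div_one_div] at H
  refine H.trans_eq ?_
  congr 1
  · congr 1
    refine Finset.sum_congr rfl fun i _ => ?_
    rw [← ENNReal.rpow_mul, mul_one_div_cancel hs0.ne', ENNReal.rpow_one]
  · congr 1
    simp [ENNReal.one_rpow]

lemma measure_zero_aux (C : Set ℝ) (c₀ : ℝ) (hc₀ : 0 < c₀) (m : ℕ) (hm : 1 ≤ m)
    (ρ : ℝ) (hρ : ρ ∈ Set.Ioo (0 : ℝ) 1)
    (hcov : ∀ k : ℕ, ∃ (N : ℕ) (a b : Fin N → ℝ),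
      (N : ℝ) ≤ c₀ * (m : ℝ) ^ k ∧ (∀ i, a i ≤ b i) ∧
      C ⊆ ⋃ i, Set.Icc (a i) (b i) ∧ ∑ i, (b i - a i) ≤ (1 - ρ) ^ k)
    {s : ℝ} (hs0 : 0 < s) (hs1 : s < 1)
    (hθ : (1 - ρ) ^ s * (m : ℝ) ^ (1 - s) < 1) : μH[s] C = 0 := by
  have h1s : (0:ℝ) ≤ 1 - s := by linarith
  have h1ρ0 : (0:ℝ) < 1 - ρ := by linarith [hρ.2]
  have h1ρ1 : (1:ℝ) - ρ < 1 := by linarith [hρ.1]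
  have hm0 : (0:ℝ) < (m:ℝ) := by exact_mod_cast Nat.pos_of_ne_zero (by omega)
  choose N a b hN hab hsub hsum using hcov
  set θ : ℝ := (1 - ρ) ^ s * (m : ℝ) ^ (1 - s) with hθdef
  have hθ0 : 0 < θ := mul_pos (Real.rpow_pos_of_pos h1ρ0 _) (Real.rpow_pos_of_pos hm0 _)
  -- apply the Hausdorff measure liminf bound
  have hr : Tendsto (fun k : ℕ => ENNReal.ofReal ((1 - ρ) ^ k)) atTop (𝓝 0) := by
    have h := tendsto_pow_atTop_nhds_zero_of_lt_one h1ρ0.le h1ρ1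
    simpa using ENNReal.tendsto_ofReal h
  have ht : ∀ᶠ k in atTop, ∀ i, EMetric.diam (Set.Icc (a k i) (b k i))
      ≤ ENNReal.ofReal ((1 - ρ) ^ k) := by
    refine Eventually.of_forall fun k i => ?_
    rw [EMetric.diam, Real.ediam_Icc]
    refine ENNReal.ofReal_le_ofReal ?_
    refine le_trans ?_ (hsum k)
    exact Finset.single_le_sum (fun j _ => sub_nonneg.2 (hab k j)) (Finset.mem_univ i)
  have hst : ∀ᶠ k in atTop, C ⊆ ⋃ i, Set.Icc (a k i) (b k i) :=
    Eventually.of_forall hsub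
  have hcover := hausdorffMeasure_le_liminf_sum s C
    (fun k : ℕ => ENNReal.ofReal ((1 - ρ) ^ k)) hr
    (fun k i => Set.Icc (a k i) (b k i)) ht hst
  -- bound the sums
  have key : ∀ k : ℕ, ∑ i, EMetric.diam (Set.Icc (a k i) (b k i)) ^ s
      ≤ ENNReal.ofReal (c₀ ^ (1 - s) * θ ^ k) := by
    intro k
    have hℓ : ∀ i, (0:ℝ) ≤ b k i - a k i := fun i => sub_nonneg.2 (hab k i)
    calc ∑ i, EMetric.diam (Set.Icc (a k i) (b k i)) ^ s
        = ∑ i, ENNReal.ofReal (b k i - a k i) ^ s := by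
          simp only [EMetric.diam, Real.ediam_Icc]
      _ ≤ (∑ i, ENNReal.ofReal (b k i - a k i)) ^ s * (N k : ℝ≥0∞) ^ (1 - s) :=
          holder_aux _ hs0 hs1
      _ ≤ ENNReal.ofReal ((1 - ρ) ^ k) ^ s * ENNReal.ofReal (c₀ * (m:ℝ) ^ k) ^ (1 - s) := by
          refine mul_le_mul' (ENNReal.rpow_le_rpow ?_ hs0.le) (ENNReal.rpow_le_rpow ?_ h1s)
          · rw [← ENNReal.ofReal_sum_of_nonneg (fun i _ => hℓ i)]
            exact ENNReal.ofReal_le_ofReal (hsum k)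
          · rw [← ENNReal.ofReal_natCast]
            exact ENNReal.ofReal_le_ofReal (hN k)
      _ = ENNReal.ofReal (((1 - ρ) ^ k) ^ s * (c₀ * (m:ℝ) ^ k) ^ (1 - s)) := by
          rw [ENNReal.ofReal_mul (Real.rpow_nonneg (pow_nonneg h1ρ0.le k) s),
            ENNReal.ofReal_rpow_of_nonneg (pow_nonneg h1ρ0.le k) hs0.le,
            ENNReal.ofReal_rpow_of_nonneg (mul_nonneg hc₀.le (pow_nonneg hm0.le k)) h1s]
      _ = ENNReal.ofReal (c₀ ^ (1 - s) * θ ^ k) := by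
          congr 1
          have e1 : ((1 - ρ:ℝ) ^ k) ^ s = ((1 - ρ) ^ s) ^ k := by
            rw [← Real.rpow_natCast (1 - ρ) k, ← Real.rpow_mul h1ρ0.le, mul_comm,
              Real.rpow_mul h1ρ0.le, Real.rpow_natCast]
          have e2 : ((m:ℝ) ^ k) ^ (1 - s) = ((m:ℝ) ^ (1 - s)) ^ k := by
            rw [← Real.rpow_natCast (m:ℝ) k, ← Real.rpow_mul hm0.le, mul_comm,
              Real.rpow_mul hm0.le, Real.rpow_natCast]
          rw [Real.mul_rpow hc₀.le (pow_nonneg hm0.le k), e1, e2, hθdef, mul_pow]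
          ring
  -- the bound tends to zero
  have hb : Tendsto (fun k : ℕ => ENNReal.ofReal (c₀ ^ (1 - s) * θ ^ k)) atTop (𝓝 0) := by
    have h : Tendsto (fun k : ℕ => c₀ ^ (1 - s) * θ ^ k) atTop (𝓝 0) := by
      have := (tendsto_pow_atTop_nhds_zero_of_lt_one hθ0.le hθ).const_mul (c₀ ^ (1 - s))
      simpa using this
    simpa using ENNReal.tendsto_ofReal h
  have hlim : Filter.liminf
      (fun k : ℕ => ∑ i, EMetric.diam (Set.Icc (a k i) (b k i)) ^ s) atTop ≤ 0 := by
    calc Filter.liminf (fun k : ℕ => ∑ i, EMetric.diam (Set.Icc (a k i) (b k i)) ^ s) atTop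
        ≤ Filter.liminf (fun k : ℕ => ENNReal.ofReal (c₀ ^ (1 - s) * θ ^ k)) atTop :=
          liminf_le_liminf (Eventually.of_forall key)
      _ = 0 := hb.liminf_eq
  exact le_antisymm (hcover.trans hlim) (zero_le)

/-- **Cantor-set dimension estimate.** If `C ⊆ ℝ` admits, for every `k`, a cover by at most
`c₀ * m ^ k` bounded intervals of total length at most `(1 - ρ) ^ k`, then the Hausdorff
dimension of `C` is at most `log m / (log m - log (1 - ρ))`, a quantity strictly less
than `1`. -/
theorem stmt1 (C : Set ℝ) (c₀ : ℝ) (hc₀ : 0 < c₀) (m : ℕ) (hm : 1 ≤ m)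
    (ρ : ℝ) (hρ : ρ ∈ Set.Ioo (0 : ℝ) 1)
    (hcov : ∀ k : ℕ, ∃ (N : ℕ) (a b : Fin N → ℝ),
      (N : ℝ) ≤ c₀ * (m : ℝ) ^ k ∧ (∀ i, a i ≤ b i) ∧
      C ⊆ ⋃ i, Set.Icc (a i) (b i) ∧ ∑ i, (b i - a i) ≤ (1 - ρ) ^ k) :
    dimH C ≤ ENNReal.ofReal (Real.log m / (Real.log m - Real.log (1 - ρ))) ∧
      Real.log m / (Real.log m - Real.log (1 - ρ)) < 1 := by
  have h1ρ0 : (0:ℝ) < 1 - ρ := by linarith [hρ.2]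
  have h1ρ1 : (1:ℝ) - ρ < 1 := by linarith [hρ.1]
  have hm0 : (0:ℝ) < (m:ℝ) := by exact_mod_cast Nat.pos_of_ne_zero (by omega)
  have hm1 : (1:ℝ) ≤ (m:ℝ) := by exact_mod_cast hm
  have hlogρ : Real.log (1 - ρ) < 0 := Real.log_neg h1ρ0 h1ρ1
  have hlogm : 0 ≤ Real.log m := Real.log_nonneg hm1
  have hD : 0 < Real.log m - Real.log (1 - ρ) := by linarith
  set d : ℝ := Real.log m / (Real.log m - Real.log (1 - ρ)) with hddef
  have hd0 : 0 ≤ d := div_nonneg hlogm hD.le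
  have hd1 : d < 1 := by
    rw [hddef, div_lt_one hD]; linarith
  -- for every s ∈ (d, 1), the contraction factor is < 1
  have hθlt : ∀ s : ℝ, d < s → s < 1 → (1 - ρ) ^ s * (m : ℝ) ^ (1 - s) < 1 := by
    intro s hds hs1
    have hθ0 : 0 < (1 - ρ) ^ s * (m : ℝ) ^ (1 - s) :=
      mul_pos (Real.rpow_pos_of_pos h1ρ0 _) (Real.rpow_pos_of_pos hm0 _)
    refine (Real.log_neg_iff hθ0).1 ?_
    rw [Real.log_mul (Real.rpow_pos_of_pos h1ρ0 _).ne' (Real.rpow_pos_of_pos hm0 _).ne',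
      Real.log_rpow h1ρ0, Real.log_rpow hm0]
    have hds' : Real.log m < s * (Real.log m - Real.log (1 - ρ)) := by
      rw [hddef, div_lt_iff₀ hD] at hds; linarith [hds]
    nlinarith [hds']
  refine ⟨?_, hd1⟩
  refine dimH_le fun d' hd' => ?_
  by_contra hlt
  push_neg at hlt
  have hdd' : d < (d' : ℝ) := by
    rw [← ENNReal.ofReal_coe_nnreal] at hlt
    exact (ENNReal.ofReal_lt_ofReal_iff_of_nonneg hd0).1 hlt
  set s : ℝ := (d + min (d' : ℝ) 1) / 2 with hsdef
  have hdmin : d < min (d' : ℝ) 1 := lt_min hdd' hd1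
  have hds : d < s := by rw [hsdef]; linarith
  have hs1 : s < 1 := by
    have := min_le_right (d' : ℝ) 1
    rw [hsdef]; linarith [hdmin]
  have hsd' : s < (d' : ℝ) := by
    have := min_le_left (d' : ℝ) 1
    rw [hsdef]; linarith [hdmin]
  have hs0 : 0 < s := lt_of_le_of_lt hd0 hds
  have hzero : μH[s] C = 0 :=
    measure_zero_aux C c₀ hc₀ m hm ρ hρ hcov hs0 hs1 (hθlt s hds hs1)
  rcases hausdorffMeasure_zero_or_top hsd' C with h | h
  · rw [hd'] at h; exact ENNReal.top_ne_zero h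
  · rw [hzero] at h; exact ENNReal.zero_ne_top h
end

section
/- Let C ⊆ ℝ, c₀ > 0 a real constant, m ≥ 1 an integer, and ρ ∈ (0,1). Assume that for every k ∈ ℕ there is a finite family of N_k ≤ c₀·m^k bounded intervals whose union covers C and whose lengths ℓ_{k,1},…,ℓ_{k,N_k} satisfy ℓ_{k,1}+⋯+ℓ_{k,N_k} ≤ (1−ρ)^k. Then for every β ∈ (0,1] with (1−ρ)^β · m^{1−β} < 1, the β-dimensional Hausdorff measure of C is zero. -/
open MeasureTheory

/-- Power-mean inequality: `∑ ℓ i ^ β ≤ N ^ (1 - β) * (∑ ℓ i) ^ β` for `β ∈ (0, 1]`. -/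
lemma sum_rpow_le_card_rpow {N : ℕ} (ℓ : Fin N → ℝ) (hℓ : ∀ i, 0 ≤ ℓ i)
    {β : ℝ} (hβ : 0 < β) (hβ1 : β ≤ 1) :
    ∑ i, ℓ i ^ β ≤ (N : ℝ) ^ (1 - β) * (∑ i, ℓ i) ^ β := by
  rcases Nat.eq_zero_or_pos N with hN | hN
  · subst hN
    simp only [Finset.univ_eq_empty, Finset.sum_empty, Nat.cast_zero]
    exact mul_nonneg (Real.rpow_nonneg le_rfl _) (Real.rpow_nonneg le_rfl _)
  have hN0 : (0 : ℝ) < N := by exact_mod_cast hN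
  have hp : 1 ≤ 1 / β := by
    rw [le_div_iff₀ hβ]; linarith
  have key := Real.rpow_arith_mean_le_arith_mean_rpow Finset.univ
      (fun _ : Fin N => 1 / (N : ℝ)) (fun i => ℓ i ^ β)
      (fun i _ => by positivity)
      (by simp [Finset.sum_const, mul_comm]; field_simp)
      (fun i _ => Real.rpow_nonneg (hℓ i) β) hp
  have hsimp : ∀ i : Fin N, (ℓ i ^ β) ^ (1 / β) = ℓ i := by
    intro i
    rw [← Real.rpow_mul (hℓ i), mul_one_div, div_self hβ.ne', Real.rpow_one]
  simp only [hsimp] at key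
  -- key : (∑ i, (1/N) * ℓ i ^ β) ^ (1/β) ≤ ∑ i, (1/N) * ℓ i
  have hsum_nonneg : 0 ≤ ∑ i, (1 / (N : ℝ)) * ℓ i ^ β :=
    Finset.sum_nonneg fun i _ => mul_nonneg (by positivity) (Real.rpow_nonneg (hℓ i) β)
  have key2 : ∑ i, (1 / (N : ℝ)) * ℓ i ^ β ≤ (∑ i, (1 / (N : ℝ)) * ℓ i) ^ β := by
    have h1 : ((∑ i, (1 / (N : ℝ)) * ℓ i ^ β) ^ (1 / β)) ^ β ≤
        (∑ i, (1 / (N : ℝ)) * ℓ i) ^ β := by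
      apply Real.rpow_le_rpow (Real.rpow_nonneg hsum_nonneg _) key hβ.le
    rwa [← Real.rpow_mul hsum_nonneg, one_div_mul_cancel hβ.ne', Real.rpow_one] at h1
  have hmul : (N : ℝ) * ∑ i, (1 / (N : ℝ)) * ℓ i ^ β = ∑ i, ℓ i ^ β := by
    rw [Finset.mul_sum]; congr 1; ext i; field_simp
  have hmul2 : (∑ i, (1 / (N : ℝ)) * ℓ i) = (1 / (N : ℝ)) * ∑ i, ℓ i := by
    rw [Finset.mul_sum]
  calc ∑ i, ℓ i ^ β = (N : ℝ) * ∑ i, (1 / (N : ℝ)) * ℓ i ^ β := hmul.symm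
    _ ≤ (N : ℝ) * ((1 / (N : ℝ)) * ∑ i, ℓ i) ^ β := by
        rw [← hmul2]; exact mul_le_mul_of_nonneg_left key2 hN0.le
    _ = (N : ℝ) ^ (1 - β) * (∑ i, ℓ i) ^ β := by
        rw [Real.mul_rpow (by positivity) (Finset.sum_nonneg fun i _ => hℓ i),
          Real.div_rpow zero_le_one hN0.le, Real.one_rpow,
          Real.rpow_sub hN0, Real.rpow_one]
        field_simp

/-- **Hausdorff-measure estimate for Cantor-type covers.** If `C ⊆ ℝ` admits, for every `k`,
a cover by at most `c₀ * m ^ k` bounded intervals of total length at most `(1 - ρ) ^ k`,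
then for every `β ∈ (0, 1]` with `(1 - ρ) ^ β * m ^ (1 - β) < 1`, the `β`-dimensional
Hausdorff measure of `C` vanishes. -/
theorem stmt2 (C : Set ℝ) (c₀ : ℝ) (hc₀ : 0 < c₀) (m : ℕ) (hm : 1 ≤ m)
    (ρ : ℝ) (hρ : ρ ∈ Set.Ioo (0 : ℝ) 1)
    (hcov : ∀ k : ℕ, ∃ (N : ℕ) (a b : Fin N → ℝ),
      (N : ℝ) ≤ c₀ * (m : ℝ) ^ k ∧ (∀ i, a i ≤ b i) ∧
      C ⊆ ⋃ i, Set.Icc (a i) (b i) ∧ ∑ i, (b i - a i) ≤ (1 - ρ) ^ k) :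
    ∀ β : ℝ, β ∈ Set.Ioc (0 : ℝ) 1 → (1 - ρ) ^ β * (m : ℝ) ^ (1 - β) < 1 →
      μH[β] C = 0 := by
  intro β hβmem hq
  obtain ⟨hβ, hβ1⟩ := hβmem
  obtain ⟨hρ0, hρ1⟩ := hρ
  have h1ρ0 : (0 : ℝ) ≤ 1 - ρ := by linarith
  have h1ρ1 : 1 - ρ < 1 := by linarith
  have hm0 : (0 : ℝ) < m := by exact_mod_cast hm
  set q : ℝ := (1 - ρ) ^ β * (m : ℝ) ^ (1 - β) with hqdef
  have hq0 : 0 ≤ q := mul_nonneg (Real.rpow_nonneg h1ρ0 _) (Real.rpow_nonneg hm0.le _)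
  choose N a b hN hab hC hsum using hcov
  set t : ∀ k : ℕ, Fin (N k) → Set ℝ := fun k i => Set.Icc (a k i) (b k i) with ht_def
  -- lengths are bounded by (1-ρ)^k
  have hlen : ∀ k i, b k i - a k i ≤ (1 - ρ) ^ k := by
    intro k i
    refine le_trans ?_ (hsum k)
    exact Finset.single_le_sum (f := fun j => b k j - a k j)
      (fun j _ => sub_nonneg.2 (hab k j)) (Finset.mem_univ i)
  have hdiam : ∀ k i, EMetric.diam (t k i) = ENNReal.ofReal (b k i - a k i) := by
    intro k i; exact Real.ediam_Icc _ _
  have hμ : μH[β] C ≤ Filter.liminf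
      (fun k => ∑ i, EMetric.diam (t k i) ^ β) Filter.atTop := by
    apply MeasureTheory.Measure.hausdorffMeasure_le_liminf_sum β C
      (fun k => ENNReal.ofReal ((1 - ρ) ^ k))
    · have : Filter.Tendsto (fun k : ℕ => (1 - ρ) ^ k) Filter.atTop (nhds 0) :=
        tendsto_pow_atTop_nhds_zero_of_lt_one h1ρ0 h1ρ1
      have := (ENNReal.continuous_ofReal.tendsto 0).comp this
      simpa [Function.comp_def] using this
    · refine Filter.Eventually.of_forall fun k i => ?_
      rw [show Metric.ediam (t k i) = EMetric.diam (t k i) from rfl, hdiam k i]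
      exact ENNReal.ofReal_le_ofReal (hlen k i)
    · exact Filter.Eventually.of_forall fun k => hC k
  -- bound the sums
  have hbound : ∀ k : ℕ, (∑ i, EMetric.diam (t k i) ^ β) ≤
      ENNReal.ofReal (c₀ ^ (1 - β) * q ^ k) := by
    intro k
    have hnn : ∀ i, 0 ≤ b k i - a k i := fun i => by linarith [hab k i]
    have heq : (∑ i, EMetric.diam (t k i) ^ β) =
        ENNReal.ofReal (∑ i, (b k i - a k i) ^ β) := by
      rw [ENNReal.ofReal_sum_of_nonneg (fun i _ => Real.rpow_nonneg (hnn i) β)]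
      congr 1; ext i
      rw [hdiam k i, ← ENNReal.ofReal_rpow_of_nonneg (hnn i) hβ.le]
    rw [heq]
    apply ENNReal.ofReal_le_ofReal
    calc ∑ i, (b k i - a k i) ^ β
        ≤ ((N k : ℝ)) ^ (1 - β) * (∑ i, (b k i - a k i)) ^ β :=
          sum_rpow_le_card_rpow _ hnn hβ hβ1
      _ ≤ (c₀ * (m : ℝ) ^ k) ^ (1 - β) * ((1 - ρ) ^ k) ^ β := by
          apply mul_le_mul
          · exact Real.rpow_le_rpow (Nat.cast_nonneg _) (hN k) (by linarith)
          · exact Real.rpow_le_rpow (Finset.sum_nonneg fun i _ => hnn i) (hsum k) hβ.le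
          · exact Real.rpow_nonneg (Finset.sum_nonneg fun i _ => hnn i) _
          · exact Real.rpow_nonneg (by positivity) _
      _ = c₀ ^ (1 - β) * q ^ k := by
          rw [Real.mul_rpow hc₀.le (by positivity),
            ← Real.rpow_natCast ((m : ℝ)) k, ← Real.rpow_natCast (1 - ρ) k,
            ← Real.rpow_mul hm0.le, ← Real.rpow_mul h1ρ0,
            mul_comm (k : ℝ) (1 - β), mul_comm (k : ℝ) β,
            Real.rpow_mul hm0.le, Real.rpow_mul h1ρ0,
            Real.rpow_natCast, Real.rpow_natCast, hqdef, mul_pow]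
          ring
  -- the bound tends to zero
  have htend : Filter.Tendsto (fun k : ℕ => ENNReal.ofReal (c₀ ^ (1 - β) * q ^ k))
      Filter.atTop (nhds 0) := by
    have h1 : Filter.Tendsto (fun k : ℕ => c₀ ^ (1 - β) * q ^ k) Filter.atTop (nhds 0) := by
      have := (tendsto_pow_atTop_nhds_zero_of_lt_one hq0 hq).const_mul (c₀ ^ (1 - β))
      simpa using this
    have := (ENNReal.continuous_ofReal.tendsto 0).comp h1
    simpa [Function.comp_def] using this
  have hliminf : Filter.liminf (fun k => ∑ i, EMetric.diam (t k i) ^ β) Filter.atTop = 0 := by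
    refine le_antisymm ?_ (zero_le)
    calc Filter.liminf (fun k => ∑ i, EMetric.diam (t k i) ^ β) Filter.atTop
        ≤ Filter.liminf (fun k : ℕ => ENNReal.ofReal (c₀ ^ (1 - β) * q ^ k)) Filter.atTop :=
          Filter.liminf_le_liminf (Filter.Eventually.of_forall hbound)
      _ = 0 := htend.liminf_eq
  rw [← le_zero_iff]
  calc μH[β] C ≤ _ := hμ
    _ = 0 := hliminf
end

section
/- Let E be a finite nonempty set, λ ∈ (0,1), f : E → ℝ, and set F = max_{e,e' ∈ E} |f(e) − f(e')| and H(p) = ∑_{n=0}^∞ λ^n f(p_n) for p ∈ E^ℕ. Let δ > 0 and let b ≥ 1 be an integer with F·λ^b/(1−λ) < δ. Suppose e, e' ∈ E satisfy |f(e) − f(e')| ≥ δ. Then for any sequences p, p' ∈ E^ℕ with p_0 = e, p'_0 = e', and p_n = p'_n for all 1 ≤ n ≤ b−1, one has H(p) ≠ H(p'). -/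
/-- **Gap lemma on sequence space.** Let `E` be finite nonempty, `λ ∈ (0,1)`, `f : E → ℝ`,
`F = max_{e,e'} |f e - f e'|`, `H p = ∑' n, λ ^ n * f (p n)`. Let `δ > 0` and `b ≥ 1` with
`F * λ ^ b / (1 - λ) < δ`, and suppose `|f e - f e'| ≥ δ`. Then any two sequences starting
with `e` and `e'` respectively and agreeing in positions `1, …, b - 1` have different
values under `H`. -/
theorem stmt7 {E : Type*} [Fintype E] [Nonempty E]
    (lam : ℝ) (hlam : lam ∈ Set.Ioo (0 : ℝ) 1) (f : E → ℝ)
    (F : ℝ) (hF : IsGreatest {x : ℝ | ∃ e e' : E, x = |f e - f e'|} F)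
    (δ : ℝ) (hδ : 0 < δ) (b : ℕ) (hb : 1 ≤ b)
    (hgap : F * lam ^ b / (1 - lam) < δ)
    (e e' : E) (he : δ ≤ |f e - f e'|)
    (p p' : ℕ → E) (hp : p 0 = e) (hp' : p' 0 = e')
    (hagree : ∀ n : ℕ, 1 ≤ n → n ≤ b - 1 → p n = p' n) :
    (∑' n : ℕ, lam ^ n * f (p n)) ≠ ∑' n : ℕ, lam ^ n * f (p' n) := by
  obtain ⟨hl0, hl1⟩ := hlam
  have hlamnn : (0:ℝ) ≤ lam := hl0.le
  have hFub : ∀ x y : E, |f x - f y| ≤ F := fun x y => hF.2 ⟨x, y, rfl⟩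
  set g : ℕ → ℝ := fun n => lam ^ n * (f (p n) - f (p' n)) with hg
  have habs : ∀ n, |g n| ≤ F * lam ^ n := by
    intro n
    rw [hg, abs_mul, abs_pow, abs_of_nonneg hlamnn, mul_comm]
    exact mul_le_mul_of_nonneg_right (hFub _ _) (pow_nonneg hlamnn n)
  have hsumgeo : Summable (fun n : ℕ => F * lam ^ n) :=
    (summable_geometric_of_lt_one hlamnn hl1).mul_left F
  have hsumabs : Summable (fun n => |g n|) :=
    hsumgeo.of_nonneg_of_le (fun n => abs_nonneg _) habs
  have hsumg : Summable g := hsumabs.of_abs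
  set C : ℝ := Finset.univ.sup' Finset.univ_nonempty (fun x : E => |f x|) with hC
  have hCle : ∀ x : E, |f x| ≤ C := fun x => Finset.le_sup' (fun x : E => |f x|) (Finset.mem_univ x)
  have hsump : ∀ q : ℕ → E, Summable (fun n : ℕ => lam ^ n * f (q n)) := by
    intro q
    apply Summable.of_norm_bounded (g := fun n : ℕ => C * lam ^ n)
      ((summable_geometric_of_lt_one hlamnn hl1).mul_left C)
    intro n
    rw [Real.norm_eq_abs, abs_mul, abs_pow, abs_of_nonneg hlamnn, mul_comm]
    exact mul_le_mul_of_nonneg_right (hCle (q n)) (pow_nonneg hlamnn n)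
  clear_value g C
  intro heq
  have hg0 : ∑' n, g n = 0 := by
    have h := Summable.tsum_sub (hsump p) (hsump p')
    have hge : g = fun n => lam ^ n * f (p n) - lam ^ n * f (p' n) := by
      funext n; rw [hg]; ring
    rw [hge, h, heq, sub_self]
  have hsplit : ∑' n, g n = (∑ n ∈ Finset.range b, g n) + ∑' n, g (n + b) :=
    (Summable.sum_add_tsum_nat_add b hsumg).symm
  have hfin : ∑ n ∈ Finset.range b, g n = f e - f e' := by
    rw [Finset.sum_eq_single 0]
    · simp [hg, hp, hp']
    · intro n hn hn0
      have h1 : 1 ≤ n := Nat.one_le_iff_ne_zero.mpr hn0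
      have h2 : n ≤ b - 1 := Nat.le_sub_one_of_lt (Finset.mem_range.mp hn)
      simp [hg, hagree n h1 h2]
    · intro h; exact absurd (Finset.mem_range.mpr (Nat.lt_of_lt_of_le Nat.zero_lt_one hb)) h
  have htail : |∑' n, g (n + b)| ≤ F * lam ^ b / (1 - lam) := by
    have hsg : Summable (fun n => g (n + b)) := (summable_nat_add_iff b).mpr hsumg
    have h1 : |∑' n, g (n + b)| ≤ ∑' n, |g (n + b)| := by
      simpa [Real.norm_eq_abs] using
        norm_tsum_le_tsum_norm (f := fun n => g (n + b))
          ((summable_nat_add_iff b).mpr (hsumabs.congr fun n => (Real.norm_eq_abs _).symm))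
    have hbd : ∀ n : ℕ, |g (n + b)| ≤ F * lam ^ b * lam ^ n := by
      intro n
      calc |g (n + b)| ≤ F * lam ^ (n + b) := habs _
        _ = F * lam ^ b * lam ^ n := by rw [pow_add]; ring
    have hs1 : Summable (fun n : ℕ => |g (n + b)|) := (summable_nat_add_iff (f := fun n => |g n|) b).mpr hsumabs
    have hs2 : Summable (fun n : ℕ => F * lam ^ b * lam ^ n) :=
      (summable_geometric_of_lt_one hlamnn hl1).mul_left (F * lam ^ b)
    have h2 : ∑' n, |g (n + b)| ≤ ∑' n : ℕ, F * lam ^ b * lam ^ n :=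
      Summable.tsum_le_tsum hbd hs1 hs2
    have h3 : ∑' n : ℕ, F * lam ^ b * lam ^ n = F * lam ^ b / (1 - lam) := by
      rw [tsum_mul_left, tsum_geometric_of_lt_one hlamnn hl1]
      field_simp
    linarith
  have key : |f e - f e'| ≤ F * lam ^ b / (1 - lam) := by
    have : f e - f e' = -∑' n, g (n + b) := by linarith [hg0, hsplit, hfin]
    rw [this, abs_neg]; exact htail
  linarith [he.trans key]
end
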